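/- arXiv:2512.21469 — 2 statements merged into one kernel-verified Lean document; each statement's English description precedes it below -/
import Mathlib

section
/- Let A ∈ ℝ^{n×n} be invertible with eigenvector matrix Ψ putting A in block upper-triangular (Jordan) form Λ = blkdiag(Λ_m, Λ_⊥) where Λ_m ∈ ℂ^{m×m} is invertible. If U[0] = Ψ [K_{m,r}; K_⊥] has orthonormal columns with rank(K_{m,r}) = r, then for every k the iterate U[k] of the natural power method can be written U[k] = Ψ [K_{m,r}^{(k)}; K_⊥^{(k)}] with rank(K_{m,r}^{(k)}) = r; i.e., the set V_{m,r} is forward invariant. -/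
/-!
Since `Ψ⁻¹ A Ψ` is block diagonal, multiplying `U = Ψ [K; K⊥]` by `A` on the left and by an
invertible `C` on the right gives `Ψ [Λ_m K C; Λ_⊥ K⊥ C]`, and `rank (Λ_m K C) = rank K`.
The normalizing factor `C = (Uᵀ Aᵀ A U)^{-1/2}` is invertible: a full-rank leading block makes
`U`, hence `A U`, injective, so the Gram matrix `(A U)ᵀ (A U)` is positive definite.
-/

open Matrix

open Classical in
noncomputable def invSqrt {q : Type*} [Fintype q] [DecidableEq q]
    (M : Matrix q q ℝ) : Matrix q q ℝ :=
  if h : M.PosSemidef then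
    ((h.1.eigenvectorUnitary : Matrix q q ℝ) * diagonal (Real.sqrt ∘ h.1.eigenvalues) *
      (star h.1.eigenvectorUnitary : Matrix q q ℝ))⁻¹ else 0

/-- The natural power method iteration `U[k+1] = A U[k] (U[k]ᵀ Aᵀ A U[k])^{-1/2}`. -/
noncomputable def npmSeq {N q : Type*} [Fintype N] [Fintype q] [DecidableEq q]
    (A : Matrix N N ℝ) (U0 : Matrix N q ℝ) : ℕ → Matrix N q ℝ
  | 0 => U0
  | k + 1 => A * npmSeq A U0 k * invSqrt ((npmSeq A U0 k)ᵀ * Aᵀ * A * npmSeq A U0 k)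

namespace Matrix

theorem mulVec_injective_of_rank_eq_card {m n K : Type*} [Fintype n] [Field K] {A : Matrix m n K}
    (hA : A.rank = Fintype.card n) : Function.Injective A.mulVec := by
  have hker := A.mulVecLin.finrank_range_add_finrank_ker
  rw [← rank, hA, Module.finrank_fintype_fun_eq_card, add_eq_left,
    Submodule.finrank_eq_zero] at hker
  exact LinearMap.ker_eq_bot.mp hker

theorem isUnit_det_map {n R S : Type*} [Fintype n] [DecidableEq n] [CommRing R] [CommRing S]
    (f : R →+* S) {M : Matrix n n R} (hM : IsUnit M.det) : IsUnit (M.map f).det :=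
  RingHom.map_det f M ▸ hM.map f

theorem PosDef.isUnit_det_invSqrt {q : Type*} [Fintype q] [DecidableEq q] {M : Matrix q q ℝ}
    (hM : M.PosDef) :
    IsUnit (invSqrt M).det := by
  rw [invSqrt, dif_pos hM.posSemidef]
  refine isUnit_nonsing_inv_det _ ?_
  rw [det_mul, det_mul, det_diagonal]
  refine ((isUnit_iff_isUnit_det _).mp Unitary.isUnit_coe).mul ?_ |>.mul
    ((isUnit_iff_isUnit_det _).mp Unitary.isUnit_coe.star)
  exact isUnit_iff_ne_zero.mpr <| Finset.prod_ne_zero_iff.mpr fun i _ =>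
    (Real.sqrt_pos.mpr (hM.eigenvalues_pos i)).ne'

end Matrix

variable {m p q N : Type*} [Fintype m] [Fintype p] [Fintype q]

/-- `U ∈ V_{m,r}` in the paper's notation, with `Ψ` the change of basis and `q` indexing the
`r` columns. -/
def LeadingBlockFullRank (Ψ : Matrix N (m ⊕ p) ℂ) (U : Matrix N q ℝ) : Prop :=
  ∃ (K : Matrix m q ℂ) (Kp : Matrix p q ℂ),
    U.map (fun x => (x : ℂ)) = Ψ * fromRows K Kp ∧ K.rank = Fintype.card q

theorem LeadingBlockFullRank.mulVec_injective {Ψ : Matrix N (m ⊕ p) ℂ} {U : Matrix N q ℝ}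
    (hΨ : Function.Injective Ψ.mulVec) (hU : LeadingBlockFullRank Ψ U) :
    Function.Injective U.mulVec := by
  obtain ⟨K, Kp, hUΨ, hK⟩ := hU
  have hmap (v : q → ℝ) : Ψ *ᵥ (fromRows K Kp *ᵥ (fun i => (v i : ℂ))) =
      fun i => ((U *ᵥ v) i : ℂ) := by
    ext i
    rw [mulVec_mulVec, ← hUΨ]
    exact (RingHom.map_mulVec Complex.ofRealHom U v i).symm
  intro v w hvw
  have hrows :
      fromRows K Kp *ᵥ (fun i => (v i : ℂ)) = fromRows K Kp *ᵥ (fun i => (w i : ℂ)) :=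
    hΨ (by rw [hmap v, hmap w, hvw])
  have hK' := mulVec_injective_of_rank_eq_card hK (congrArg (· ∘ Sum.inl) hrows)
  exact funext fun i => Complex.ofReal_injective (congrFun hK' i)

theorem LeadingBlockFullRank.mul_mul [Fintype N] [DecidableEq m] [DecidableEq q]
    {Ψ : Matrix N (m ⊕ p) ℂ} {A : Matrix N N ℝ} {Λm : Matrix m m ℂ} {Λp : Matrix p p ℂ}
    (hAΨ : A.map (fun x => (x : ℂ)) * Ψ = Ψ * fromBlocks Λm 0 0 Λp) (hΛm : IsUnit Λm.det)
    {U : Matrix N q ℝ} (hU : LeadingBlockFullRank Ψ U) {C : Matrix q q ℝ} (hC : IsUnit C.det) :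
    LeadingBlockFullRank Ψ (A * U * C) := by
  obtain ⟨K, Kp, hUΨ, hK⟩ := hU
  set ι : ℝ →+* ℂ := Complex.ofRealHom
  change A.map ι * Ψ = _ at hAΨ
  change U.map ι = _ at hUΨ
  refine ⟨Λm * K * C.map ι, Λp * Kp * C.map ι, ?_, ?_⟩
  · calc (A * U * C).map ι = A.map ι * U.map ι * C.map ι := by simp only [Matrix.map_mul]
      _ = Ψ * fromBlocks Λm 0 0 Λp * fromRows K Kp * C.map ι := by
        rw [hUΨ, ← Matrix.mul_assoc, hAΨ]
      _ = Ψ * fromRows (Λm * K * C.map ι) (Λp * Kp * C.map ι) := by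
        rw [Matrix.mul_assoc Ψ, fromBlocks_mul_fromRows, Matrix.mul_assoc, fromRows_mul]
        simp only [Matrix.zero_mul, add_zero, zero_add]
  · rw [rank_mul_eq_left_of_isUnit_det _ _ (isUnit_det_map ι hC),
      rank_mul_eq_right_of_isUnit_det _ _ hΛm, hK]

theorem leadingBlockFullRank_npmSeq [Fintype N] [DecidableEq N] [DecidableEq m] [DecidableEq q]
    {A : Matrix N N ℝ} (hA : IsUnit A.det) {Ψ : Matrix N (m ⊕ p) ℂ}
    (hΨ : Function.Injective Ψ.mulVec) {Λm : Matrix m m ℂ} {Λp : Matrix p p ℂ}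
    (hAΨ : A.map (fun x => (x : ℂ)) * Ψ = Ψ * fromBlocks Λm 0 0 Λp) (hΛm : IsUnit Λm.det)
    {U0 : Matrix N q ℝ} (hU0 : LeadingBlockFullRank Ψ U0) (k : ℕ) :
    LeadingBlockFullRank Ψ (npmSeq A U0 k) := by
  induction k with
  | zero => exact hU0
  | succ k ih =>
    set U := npmSeq A U0 k
    have hAU : Function.Injective (A * U).mulVec := by
      have hcomp : (A * U).mulVec = A.mulVec ∘ U.mulVec :=
        funext fun v => (mulVec_mulVec v A U).symm
      rw [hcomp]
      exact (mulVec_injective_iff_isUnit.mpr ((isUnit_iff_isUnit_det A).mpr hA)).comp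
        (ih.mulVec_injective hΨ)
    have hgram : (Uᵀ * Aᵀ * A * U).PosDef := by
      simpa only [conjTranspose_eq_transpose_of_trivial, transpose_mul, ← Matrix.mul_assoc] using
        PosDef.conjTranspose_mul_self _ hAU
    exact ih.mul_mul hAΨ hΛm hgram.isUnit_det_invSqrt

theorem stmt_3_general {m p r : ℕ}
    (A : Matrix (Fin m ⊕ Fin p) (Fin m ⊕ Fin p) ℝ) (hA : IsUnit A.det)
    (Ψ : Matrix (Fin m ⊕ Fin p) (Fin m ⊕ Fin p) ℂ) (hΨ : IsUnit Ψ.det)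
    (Λm : Matrix (Fin m) (Fin m) ℂ) (hΛm : IsUnit Λm.det)
    (Λp : Matrix (Fin p) (Fin p) ℂ)
    (hblk : Ψ⁻¹ * A.map (fun x => (x : ℂ)) * Ψ = Matrix.fromBlocks Λm 0 0 Λp)
    (K : Matrix (Fin m) (Fin r) ℂ) (Kp : Matrix (Fin p) (Fin r) ℂ)
    (hrank : K.rank = r)
    (U0 : Matrix (Fin m ⊕ Fin p) (Fin r) ℝ)
    (hU0 : U0.map (fun x => (x : ℂ)) = Ψ * Matrix.fromRows K Kp) :
    ∀ k : ℕ, ∃ (Kk : Matrix (Fin m) (Fin r) ℂ) (Kpk : Matrix (Fin p) (Fin r) ℂ),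
      (npmSeq A U0 k).map (fun x => (x : ℂ)) = Ψ * Matrix.fromRows Kk Kpk ∧
      Kk.rank = r := by
  have hAΨ : A.map (fun x => (x : ℂ)) * Ψ = Ψ * fromBlocks Λm 0 0 Λp := by
    rw [← hblk, ← Matrix.mul_assoc, ← Matrix.mul_assoc, mul_nonsing_inv _ hΨ, Matrix.one_mul]
  have hΨinj : Function.Injective Ψ.mulVec :=
    mulVec_injective_iff_isUnit.mpr ((isUnit_iff_isUnit_det Ψ).mpr hΨ)
  have hU0V : LeadingBlockFullRank Ψ U0 := ⟨K, Kp, hU0, by rw [hrank, Fintype.card_fin]⟩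
  intro k
  obtain ⟨Kk, Kpk, hUk, hrk⟩ := leadingBlockFullRank_npmSeq hA hΨinj hAΨ hΛm hU0V k
  exact ⟨Kk, Kpk, hUk, hrk.trans (Fintype.card_fin r)⟩

/-- Forward invariance of the set `V_{m,r}` under the natural power method. -/
theorem stmt_3 {m p r : ℕ}
    (A : Matrix (Fin m ⊕ Fin p) (Fin m ⊕ Fin p) ℝ) (hA : IsUnit A.det)
    (Ψ : Matrix (Fin m ⊕ Fin p) (Fin m ⊕ Fin p) ℂ) (hΨ : IsUnit Ψ.det)
    (Λm : Matrix (Fin m) (Fin m) ℂ) (hΛm : IsUnit Λm.det)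
    (Λp : Matrix (Fin p) (Fin p) ℂ)
    (hblk : Ψ⁻¹ * A.map (fun x => (x : ℂ)) * Ψ = Matrix.fromBlocks Λm 0 0 Λp)
    (K : Matrix (Fin m) (Fin r) ℂ) (Kp : Matrix (Fin p) (Fin r) ℂ)
    (hrank : K.rank = r)
    (U0 : Matrix (Fin m ⊕ Fin p) (Fin r) ℝ) (hU0orth : U0ᵀ * U0 = 1)
    (hU0 : U0.map (fun x => (x : ℂ)) = Ψ * Matrix.fromRows K Kp) :
    ∀ k : ℕ, ∃ (Kk : Matrix (Fin m) (Fin r) ℂ) (Kpk : Matrix (Fin p) (Fin r) ℂ),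
      (npmSeq A U0 k).map (fun x => (x : ℂ)) = Ψ * Matrix.fromRows Kk Kpk ∧
      Kk.rank = r :=
  stmt_3_general A hA Ψ hΨ Λm hΛm Λp hblk K Kp hrank U0 hU0
end

section
/- Under the hypotheses of the previous two statements, if the pair (A, C) is observable (the observability Gramian Σ_{i=0}^{n-1}(A⊤)^i C⊤C A^i is positive definite) and Ū spans an A-invariant subspace, then the reduced pair (A_Ū, C_Ū) is observable (its r×r observability Gramian is positive definite). -/
/-!
An `A`-invariant subspace spanned by the orthonormal columns of `Ū` gives `A Ū = Ū A_Ū`, hence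
`C A^i Ū x = C_Ū A_Ū^i x`. If `x ≠ 0` then `Ū x ≠ 0`, so observability of `(A, C)` yields some
`i` with `C_Ū A_Ū^i x ≠ 0`; by Cayley–Hamilton for the `r × r` matrix `A_Ū` such an `i` can be
taken below `r`, which is positive definiteness of the reduced Gramian.
-/

open Matrix Finset Polynomial

namespace Matrix

variable {ι κ ν R : Type*} [Fintype ι] [DecidableEq ι]

theorem exists_pow_eq_sum_range_card_smul_pow [CommRing R] [Nontrivial R]
    (B : Matrix ι ι R) (m : ℕ) :
    ∃ c : ℕ → R, B ^ m = ∑ j ∈ range (Fintype.card ι), c j • B ^ j := by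
  rcases isEmpty_or_nonempty ι with _ | _
  · exact ⟨0, Subsingleton.elim _ _⟩
  have hdeg : B.charpoly.natDegree = Fintype.card ι := B.charpoly_natDegree_eq_dim
  have hne : B.charpoly ≠ 1 := fun h => by
    simp [h, eq_comm, Fintype.card_ne_zero] at hdeg
  refine ⟨(X ^ m %ₘ B.charpoly).coeff, ?_⟩
  rw [pow_eq_aeval_mod_charpoly, aeval_eq_sum_range']
  exact hdeg ▸ natDegree_modByMonic_lt _ B.charpoly_monic hne

theorem mul_pow_mulVec_eq_zero_of_forall_lt_card [CommRing R] [Nontrivial R]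
    (M : Matrix κ ι R) (B : Matrix ι ι R) (x : ι → R)
    (h : ∀ j < Fintype.card ι, (M * B ^ j) *ᵥ x = 0) (m : ℕ) :
    (M * B ^ m) *ᵥ x = 0 := by
  obtain ⟨c, hc⟩ := B.exists_pow_eq_sum_range_card_smul_pow m
  rw [hc, Matrix.mul_sum, sum_mulVec]
  refine sum_eq_zero fun j hj => ?_
  rw [Matrix.mul_smul, smul_mulVec, h j (mem_range.mp hj), smul_zero]

variable [Fintype ν] [DecidableEq ν]

theorem pow_mul_eq_mul_pow_of_mul_eq [Semiring R] {A : Matrix ι ι R} {U : Matrix ι ν R}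
    {B : Matrix ν ν R} (h : A * U = U * B) (i : ℕ) : A ^ i * U = U * B ^ i := by
  induction i with
  | zero => simp
  | succ i ih =>
    rw [pow_succ', Matrix.mul_assoc, ih, ← Matrix.mul_assoc, h, Matrix.mul_assoc, ← pow_succ']

variable [Fintype κ]

def observabilityGramian [CommRing R] (A : Matrix ι ι R) (C : Matrix κ ι R) (k : ℕ) :
    Matrix ι ι R :=
  ∑ i ∈ range k, Aᵀ ^ i * Cᵀ * C * A ^ i

theorem observabilityGramian_eq_sum_transpose_mul_self [CommRing R]
    (A : Matrix ι ι R) (C : Matrix κ ι R) (k : ℕ) :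
    observabilityGramian A C k = ∑ i ∈ range k, (C * A ^ i)ᵀ * (C * A ^ i) := by
  simp only [observabilityGramian, transpose_mul, transpose_pow, Matrix.mul_assoc]

theorem dotProduct_observabilityGramian_mulVec [CommRing R]
    (A : Matrix ι ι R) (C : Matrix κ ι R) (k : ℕ) (x : ι → R) :
    x ⬝ᵥ (observabilityGramian A C k *ᵥ x) =
      ∑ i ∈ range k, ((C * A ^ i) *ᵥ x) ⬝ᵥ ((C * A ^ i) *ᵥ x) := by
  simp only [observabilityGramian_eq_sum_transpose_mul_self, sum_mulVec, dotProduct_sum,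
    ← mulVec_mulVec, dotProduct_mulVec, vecMul_transpose]

variable [CommRing R] [LinearOrder R] [IsStrictOrderedRing R] [StarRing R] [TrivialStar R]

theorem observabilityGramian_posDef_iff (A : Matrix ι ι R) (C : Matrix κ ι R) (k : ℕ) :
    (observabilityGramian A C k).PosDef ↔ ∀ x ≠ 0, ∃ i < k, (C * A ^ i) *ᵥ x ≠ 0 := by
  have hsymm : (observabilityGramian A C k).IsHermitian := by
    simp only [IsHermitian, conjTranspose_eq_transpose_of_trivial,
      observabilityGramian_eq_sum_transpose_mul_self, transpose_sum, transpose_mul,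
      transpose_transpose]
  have hnonneg (v : κ → R) : 0 ≤ v ⬝ᵥ v := sum_nonneg fun j _ => mul_self_nonneg (v j)
  have hpos (v : κ → R) : 0 < v ⬝ᵥ v ↔ v ≠ 0 :=
    (hnonneg v).lt_iff_ne'.trans dotProduct_self_eq_zero.not
  rw [posDef_iff_dotProduct_mulVec, and_iff_right hsymm]
  refine forall_congr' fun x => imp_congr_right fun _ => ?_
  rw [star_trivial, dotProduct_observabilityGramian_mulVec,
    Finset.sum_pos_iff_of_nonneg fun i _ => hnonneg _]
  simp only [mem_range, hpos]

theorem observabilityGramian_posDef_of_mul_eq_mul {A : Matrix ι ι R} {C : Matrix κ ι R}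
    {U : Matrix ι ν R} {B : Matrix ν ν R} {k : ℕ} (hAU : A * U = U * B)
    (hU : Function.Injective (U *ᵥ ·)) (hobs : (observabilityGramian A C k).PosDef) :
    (observabilityGramian B (C * U) (Fintype.card ν)).PosDef := by
  rw [observabilityGramian_posDef_iff] at hobs ⊢
  intro x hx
  obtain ⟨i, -, hi⟩ := hobs (U *ᵥ x) fun h => hx (hU (h.trans (mulVec_zero U).symm))
  rw [mulVec_mulVec, Matrix.mul_assoc, pow_mul_eq_mul_pow_of_mul_eq hAU, ← Matrix.mul_assoc]
    at hi
  by_contra! h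
  exact hi (mul_pow_mulVec_eq_zero_of_forall_lt_card _ B x h i)

end Matrix

/-- Observability of `(A, C)` implies observability of the reduced pair
`(A_Ū, C_Ū)` for an `A`-invariant subspace spanned by `Ū`. -/
theorem stmt_13 {n r p : ℕ} (A : Matrix (Fin n) (Fin n) ℝ)
    (C : Matrix (Fin p) (Fin n) ℝ)
    (U : Matrix (Fin n) (Fin r) ℝ) (hUorth : Uᵀ * U = 1)
    (hinv : (1 - U * Uᵀ) * A * U = 0)
    (hobs : (∑ i ∈ range n, (Aᵀ) ^ i * Cᵀ * C * A ^ i).PosDef) :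
    (∑ i ∈ range r,
      ((Uᵀ * A * U)ᵀ) ^ i * (C * U)ᵀ * (C * U) * (Uᵀ * A * U) ^ i).PosDef := by
  have hAU : A * U = U * (Uᵀ * A * U) := by
    rw [Matrix.sub_mul, Matrix.sub_mul, Matrix.one_mul, sub_eq_zero] at hinv
    simpa only [Matrix.mul_assoc] using hinv
  have hU : Function.Injective (U *ᵥ ·) := fun x y hxy => by
    simpa only [mulVec_mulVec, hUorth, one_mulVec] using congrArg (Uᵀ *ᵥ ·) hxy
  simpa only [observabilityGramian, Fintype.card_fin] using
    observabilityGramian_posDef_of_mul_eq_mul hAU hU hobs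
end
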